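/- arXiv:1511.01700 — 2 statements merged into one kernel-verified Lean document; each statement's English description precedes it below -/
import Mathlib

section
/- Let n ≥ 1 and let q be a real number with q > n. Then there exists a constant C > 0 such that for every C¹ function f : ℝⁿ × ℝⁿ → ℝ whose support is contained in the closed unit ball of ℝ^{2n}, the restriction of f to the diagonal satisfies ∫_{ℝⁿ} |f(x,x)| dx ≤ C · ( (∫_{ℝ^{2n}} |f(z)|^q dz)^{1/q} + (∫_{ℝ^{2n}} ‖Df(z)‖^q dz)^{1/q} ), where Df(z) denotes the (Fréchet) derivative of f at z and ‖Df(z)‖ its operator norm. -/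
open MeasureTheory

/-- The diagonal embedding `ℝⁿ → ℝⁿ × ℝⁿ = ℝ²ⁿ`, `x ↦ (x, x)`, where `ℝ²ⁿ` is
modelled as `EuclideanSpace ℝ (Fin n ⊕ Fin n)` (so it carries the Euclidean norm). -/
noncomputable def diagE (n : ℕ) (x : EuclideanSpace ℝ (Fin n)) :
    EuclideanSpace ℝ (Fin n ⊕ Fin n) :=
  WithLp.toLp 2 (Sum.elim (x : Fin n → ℝ) (x : Fin n → ℝ) : Fin n ⊕ Fin n → ℝ)

/-!
For `‖x‖ ≤ 1` and `‖h‖ ≤ 1`, the fundamental theorem of calculus on the segment from `(x, x)` to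
`(x, x + h)` gives `|f (x, x)| ≤ |f (x, x + h)| + ∫₀¹ ‖Df (x, x + t h)‖ dt`. Integrating over
`(x, h)` in the product of two unit balls, Hölder's inequality bounds each `t`-slice by the
`L^q` norm of `Df` along the map `(x, h) ↦ (x, x + t h)`, which has Jacobian `tⁿ`; this costs a
factor `t^(-n/q)`, integrable on `(0, 1]` exactly because `q > n`.
-/

open Set
open scoped ENNReal NNReal

section Calculus

variable {E G : Type*} [NormedAddCommGroup E] [NormedSpace ℝ E] [NormedAddCommGroup G]
  [NormedSpace ℝ G]

theorem enorm_sub_le_enorm_mul_lintegral_fderiv {f : E → G} (hf : ContDiff ℝ 1 f) (a v : E) :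
    ‖f (a + v) - f a‖ₑ ≤ ‖v‖ₑ * ∫⁻ t in Icc (0 : ℝ) 1, ‖fderiv ℝ f (a + t • v)‖ₑ := by
  have hline : ContDiff ℝ 1 fun t : ℝ => a + t • v := by fun_prop
  have hderiv (t : ℝ) : deriv (fun t : ℝ => f (a + t • v)) t = fderiv ℝ f (a + t • v) v := by
    have hline' := ((hasDerivAt_id t).smul_const v).const_add a
    rw [one_smul] at hline'
    exact ((hf.differentiable one_ne_zero _).hasFDerivAt.comp_hasDerivAt t hline').deriv
  calc ‖f (a + v) - f a‖ₑ = ‖f (a + (1 : ℝ) • v) - f (a + (0 : ℝ) • v)‖ₑ := by simp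
    _ ≤ ∫⁻ t in Icc (0 : ℝ) 1, ‖deriv (fun t : ℝ => f (a + t • v)) t‖ₑ :=
      enorm_sub_le_lintegral_deriv_of_contDiffOn_Icc (hf.comp hline).contDiffOn zero_le_one
    _ ≤ ∫⁻ t in Icc (0 : ℝ) 1, ‖fderiv ℝ f (a + t • v)‖ₑ * ‖v‖ₑ := by
      gcongr with t
      rw [hderiv]
      exact ContinuousLinearMap.le_opENorm _ _
    _ = ‖v‖ₑ * ∫⁻ t in Icc (0 : ℝ) 1, ‖fderiv ℝ f (a + t • v)‖ₑ := by
      rw [lintegral_mul_const' _ _ enorm_ne_top, mul_comm]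

theorem enorm_le_enorm_add_enorm_mul_lintegral_fderiv {f : E → G} (hf : ContDiff ℝ 1 f)
    (a v : E) :
    ‖f a‖ₑ ≤ ‖f (a + v)‖ₑ + ‖v‖ₑ * ∫⁻ t in Icc (0 : ℝ) 1, ‖fderiv ℝ f (a + t • v)‖ₑ := by
  calc ‖f a‖ₑ = ‖f (a + v) - (f (a + v) - f a)‖ₑ := by rw [sub_sub_cancel]
    _ ≤ ‖f (a + v)‖ₑ + ‖f (a + v) - f a‖ₑ := enorm_sub_le
    _ ≤ _ := by gcongr; exact enorm_sub_le_enorm_mul_lintegral_fderiv hf a v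

end Calculus

section Integration

variable {α G : Type*} [MeasurableSpace α] {μ : Measure α} [NormedAddCommGroup G]

theorem setLIntegral_enorm_le_measure_rpow_mul_eLpNorm {f : α → G}
    (hf : AEStronglyMeasurable f μ) (s : Set α) {q : ℝ≥0∞} (hq : 1 ≤ q) :
    ∫⁻ a in s, ‖f a‖ₑ ∂μ ≤ μ s ^ (1 - 1 / q.toReal) * eLpNorm f q μ := by
  calc ∫⁻ a in s, ‖f a‖ₑ ∂μ = eLpNorm f 1 (μ.restrict s) := eLpNorm_one_eq_lintegral_enorm.symm
    _ ≤ eLpNorm f q (μ.restrict s) * μ.restrict s univ ^ (1 / (1 : ℝ≥0∞).toReal - 1 / q.toReal) :=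
      eLpNorm_le_eLpNorm_mul_rpow_measure_univ hq hf.restrict
    _ ≤ μ s ^ (1 - 1 / q.toReal) * eLpNorm f q μ := by
      rw [Measure.restrict_apply_univ, ENNReal.toReal_one, div_one, mul_comm]
      gcongr
      exact Measure.restrict_le_self

theorem toReal_eLpNorm_ofReal_eq {f : α → G} {q : ℝ} (hq : 0 < q)
    (hf : MemLp f (ENNReal.ofReal q) μ) :
    (eLpNorm f (ENNReal.ofReal q) μ).toReal = (∫ a, ‖f a‖ ^ q ∂μ) ^ (1 / q) := by
  rw [hf.eLpNorm_eq_integral_rpow_norm (by simpa using hq) ENNReal.ofReal_ne_top,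
    ENNReal.toReal_ofReal (by positivity), ENNReal.toReal_ofReal hq.le, one_div]

theorem setLIntegral_prod_fst {β : Type*} [MeasurableSpace β] {ν : Measure β} [SFinite μ]
    [SFinite ν] {φ : α → ℝ≥0∞} (hφ : Measurable φ) (s : Set α) (t : Set β) :
    ∫⁻ p in s ×ˢ t, φ p.1 ∂μ.prod ν = ν t * ∫⁻ x in s, φ x ∂μ := by
  rw [← Measure.prod_restrict, ← lintegral_map hφ measurable_fst, Measure.map_fst_prod,
    lintegral_smul_measure, Measure.restrict_apply_univ, smul_eq_mul]

end Integration

theorem setLIntegral_inv_pow_rpow_lt_top {n : ℕ} {q : ℝ} (hq : n < q) :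
    ∫⁻ t in Icc (0 : ℝ) 1, ENNReal.ofReal |(t ^ n)⁻¹| ^ (1 / q) < ∞ := by
  have hq0 : 0 < q := lt_of_le_of_lt n.cast_nonneg hq
  have hpow : ∀ t ∈ Ioc (0 : ℝ) 1,
      ENNReal.ofReal |(t ^ n)⁻¹| ^ (1 / q) = ENNReal.ofReal (t ^ (-(n / q))) := by
    intro t ht
    have ht0 := ht.1
    rw [abs_of_pos (by positivity), ENNReal.ofReal_rpow_of_nonneg (by positivity) (by positivity),
      ← Real.rpow_natCast, ← Real.rpow_neg ht0.le, ← Real.rpow_mul ht0.le]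
    ring_nf
  rw [← restrict_Ioc_eq_restrict_Icc, setLIntegral_congr_fun measurableSet_Ioc hpow]
  refine Integrable.lintegral_lt_top ((intervalIntegrable_iff_integrableOn_Ioc_of_le
    zero_le_one).1 (intervalIntegral.intervalIntegrable_rpow' ?_))
  have : (n : ℝ) / q < 1 := (div_lt_one hq0).2 hq
  linarith

namespace EuclideanSpace

variable {ι κ : Type*} [Fintype ι] [Fintype κ]

theorem norm_sumEquivProd_symm (x : EuclideanSpace ℝ ι) (y : EuclideanSpace ℝ κ) :
    ‖sumEquivProd.symm (x, y)‖ = √(‖x‖ ^ 2 + ‖y‖ ^ 2) :=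
  ((PiLp.sumPiLpEquivProdLpPiLp 2 (fun _ => ℝ)).symm.norm_map _).trans
    (WithLp.prod_norm_eq_of_L2 _)

theorem norm_le_norm_sumEquivProd_symm (x : EuclideanSpace ℝ ι) (y : EuclideanSpace ℝ κ) :
    ‖x‖ ≤ ‖sumEquivProd.symm (x, y)‖ := by
  rw [norm_sumEquivProd_symm]
  exact Real.le_sqrt_of_sq_le (le_add_of_nonneg_right (sq_nonneg _))

theorem norm_sumEquivProd_symm_zero_left (y : EuclideanSpace ℝ κ) :
    ‖sumEquivProd.symm ((0 : EuclideanSpace ℝ ι), y)‖ = ‖y‖ := by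
  rw [norm_sumEquivProd_symm, norm_zero, sq, zero_mul, zero_add, Real.sqrt_sq (norm_nonneg y)]

theorem measurePreserving_sumEquivProd_symm :
    MeasurePreserving (sumEquivProd (𝕜 := ℝ) (ι := ι) (κ := κ)).symm :=
  (PiLp.sumPiLpEquivProdLpPiLp 2 (fun _ : ι ⊕ κ => ℝ)).symm.measurePreserving.comp
    (WithLp.volume_preserving_toLp _ _)

end EuclideanSpace

open EuclideanSpace

section DiagShift

variable {ι G : Type*} [Fintype ι] [NormedAddCommGroup G]

noncomputable def diagShift (t : ℝ) (p : EuclideanSpace ℝ ι × EuclideanSpace ℝ ι) :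
    EuclideanSpace ℝ (ι ⊕ ι) :=
  sumEquivProd.symm (p.1, p.1 + t • p.2)

theorem continuous_diagShift :
    Continuous fun tp : ℝ × (EuclideanSpace ℝ ι × EuclideanSpace ℝ ι) => diagShift tp.1 tp.2 := by
  unfold diagShift
  fun_prop

theorem measurable_diagShift (t : ℝ) : Measurable (diagShift (ι := ι) t) :=
  (continuous_diagShift.comp (Continuous.prodMk_right t)).measurable

theorem diagShift_eq_add_smul (t : ℝ) (x h : EuclideanSpace ℝ ι) :
    diagShift t (x, h) = sumEquivProd.symm (x, x) + t • sumEquivProd.symm (0, h) := by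
  simp only [diagShift, ← map_smul, ← map_add, Prod.smul_mk, smul_zero, Prod.mk_add_mk, add_zero]

theorem map_diagShift {t : ℝ} (ht : t ≠ 0) :
    (volume : Measure (EuclideanSpace ℝ ι × EuclideanSpace ℝ ι)).map (diagShift t) =
      ENNReal.ofReal |(t ^ Fintype.card ι)⁻¹| • volume := by
  have hcomp : diagShift t = (sumEquivProd (𝕜 := ℝ) (ι := ι) (κ := ι)).symm ∘
      (fun p => (p.1, p.1 + p.2)) ∘ Prod.map id (t • ·) := by
    funext p
    rfl
  have hscale : (volume : Measure (EuclideanSpace ℝ ι × EuclideanSpace ℝ ι)).map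
      (Prod.map id (t • ·)) = ENNReal.ofReal |(t ^ Fintype.card ι)⁻¹| • volume := by
    rw [Measure.volume_eq_prod, ← Measure.map_prod_map _ _ measurable_id (measurable_const_smul t),
      Measure.map_id, Measure.map_addHaar_smul _ ht, finrank_euclideanSpace,
      Measure.prod_smul_right]
  have hshear : MeasurePreserving (fun p : EuclideanSpace ℝ ι × EuclideanSpace ℝ ι =>
      (p.1, p.1 + p.2)) := measurePreserving_prod_add volume volume
  rw [hcomp, ← Measure.map_map, ← Measure.map_map, hscale, Measure.map_smul, Measure.map_smul,
    hshear.map_eq, measurePreserving_sumEquivProd_symm.map_eq]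
  all_goals fun_prop

theorem aestronglyMeasurable_map_diagShift {g : EuclideanSpace ℝ (ι ⊕ ι) → G}
    (hg : AEStronglyMeasurable g) {t : ℝ} (ht : t ≠ 0) :
    AEStronglyMeasurable g (volume.map (diagShift t)) := by
  rw [map_diagShift ht]
  exact hg.smul_measure _

theorem eLpNorm_comp_diagShift {g : EuclideanSpace ℝ (ι ⊕ ι) → G} (hg : AEStronglyMeasurable g)
    {q : ℝ≥0∞} (hq : q ≠ ∞) {t : ℝ} (ht : t ≠ 0) :
    eLpNorm (g ∘ diagShift t) q volume =
      ENNReal.ofReal |(t ^ Fintype.card ι)⁻¹| ^ (1 / q.toReal) * eLpNorm g q volume := by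
  rw [← eLpNorm_map_measure (aestronglyMeasurable_map_diagShift hg ht)
      (measurable_diagShift t).aemeasurable, map_diagShift ht,
    eLpNorm_smul_measure_of_ne_top hq, smul_eq_mul, one_div, ENNReal.toReal_inv, one_div]

theorem setLIntegral_enorm_comp_diagShift_le {g : EuclideanSpace ℝ (ι ⊕ ι) → G}
    (hg : AEStronglyMeasurable g) (s : Set (EuclideanSpace ℝ ι × EuclideanSpace ℝ ι))
    {q : ℝ≥0∞} (hq1 : 1 ≤ q) (hq : q ≠ ∞) {t : ℝ} (ht : t ≠ 0) :
    ∫⁻ p in s, ‖g (diagShift t p)‖ₑ ≤ volume s ^ (1 - 1 / q.toReal) *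
      ENNReal.ofReal |(t ^ Fintype.card ι)⁻¹| ^ (1 / q.toReal) * eLpNorm g q volume := by
  rw [mul_assoc, ← eLpNorm_comp_diagShift hg hq ht]
  exact setLIntegral_enorm_le_measure_rpow_mul_eLpNorm
    ((aestronglyMeasurable_map_diagShift hg ht).comp_aemeasurable
      (measurable_diagShift t).aemeasurable) s hq1

variable [NormedSpace ℝ G]

theorem enorm_apply_diag_le {f : EuclideanSpace ℝ (ι ⊕ ι) → G} (hf : ContDiff ℝ 1 f)
    (x : EuclideanSpace ℝ ι) {h : EuclideanSpace ℝ ι} (hh : ‖h‖ ≤ 1) :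
    ‖f (sumEquivProd.symm (x, x))‖ₑ ≤
      ‖f (diagShift 1 (x, h))‖ₑ + ∫⁻ t in Icc (0 : ℝ) 1, ‖fderiv ℝ f (diagShift t (x, h))‖ₑ := by
  have hv : ‖(sumEquivProd (𝕜 := ℝ) (ι := ι) (κ := ι)).symm (0, h)‖ₑ ≤ 1 := by
    rw [← ofReal_norm, norm_sumEquivProd_symm_zero_left]
    exact ENNReal.ofReal_le_one.2 hh
  simp_rw [diagShift_eq_add_smul, one_smul]
  refine (enorm_le_enorm_add_enorm_mul_lintegral_fderiv hf _ (sumEquivProd.symm (0, h))).trans ?_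
  gcongr
  exact mul_le_of_le_one_left' hv

theorem setLIntegral_enorm_diag_le {f : EuclideanSpace ℝ (ι ⊕ ι) → G} (hf : ContDiff ℝ 1 f)
    {s : Set (EuclideanSpace ℝ ι)} (hs : MeasurableSet s) :
    ∫⁻ p in s ×ˢ Metric.closedBall (0 : EuclideanSpace ℝ ι) 1,
        ‖f (sumEquivProd.symm (p.1, p.1))‖ₑ ≤
      (∫⁻ p in s ×ˢ Metric.closedBall (0 : EuclideanSpace ℝ ι) 1, ‖f (diagShift 1 p)‖ₑ) +
        ∫⁻ t in Icc (0 : ℝ) 1, ∫⁻ p in s ×ˢ Metric.closedBall (0 : EuclideanSpace ℝ ι) 1,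
          ‖fderiv ℝ f (diagShift t p)‖ₑ := by
  have hslice : Measurable fun p => ‖f (diagShift (ι := ι) 1 p)‖ₑ :=
    (hf.continuous.comp (continuous_diagShift.comp
      (Continuous.prodMk_right (1 : ℝ)))).enorm.measurable
  rw [← lintegral_lintegral_swap ((hf.continuous_fderiv one_ne_zero).comp
      (continuous_diagShift.comp continuous_swap)).enorm.aemeasurable,
    ← lintegral_add_left hslice]
  exact setLIntegral_mono' (hs.prod measurableSet_closedBall)
    fun p hp => enorm_apply_diag_le hf p.1 (mem_closedBall_zero_iff.1 hp.2)

theorem volume_closedBall_mul_lintegral_enorm_diag_le {f : EuclideanSpace ℝ (ι ⊕ ι) → G}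
    (hf : ContDiff ℝ 1 f) (hsupp : Function.support f ⊆ Metric.closedBall 0 1) {q : ℝ≥0∞}
    (hq1 : 1 ≤ q) (hq : q ≠ ∞) :
    volume (Metric.closedBall (0 : EuclideanSpace ℝ ι) 1) *
        ∫⁻ x, ‖f (sumEquivProd.symm (x, x))‖ₑ ≤
      volume (Metric.closedBall (0 : EuclideanSpace ℝ ι) 1 ×ˢ
          Metric.closedBall (0 : EuclideanSpace ℝ ι) 1) ^ (1 - 1 / q.toReal) *
        (eLpNorm f q volume + (∫⁻ t in Icc (0 : ℝ) 1,
          ENNReal.ofReal |(t ^ Fintype.card ι)⁻¹| ^ (1 / q.toReal)) *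
            eLpNorm (fderiv ℝ f) q volume) := by
  set B := Metric.closedBall (0 : EuclideanSpace ℝ ι) 1
  have hdiag : volume B * ∫⁻ x, ‖f (sumEquivProd.symm (x, x))‖ₑ =
      ∫⁻ p in B ×ˢ B, ‖f (sumEquivProd.symm (p.1, p.1))‖ₑ := by
    have hsupp' : Function.support (fun x => ‖f (sumEquivProd.symm (x, x))‖ₑ) ⊆ B :=
      fun x hx => mem_closedBall_zero_iff.2 ((norm_le_norm_sumEquivProd_symm x x).trans
        (mem_closedBall_zero_iff.1 (hsupp (enorm_ne_zero.1 hx))))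
    have hmeas : Measurable fun x => ‖f (sumEquivProd.symm (x, x))‖ₑ :=
      (hf.continuous.comp (sumEquivProd.symm.continuous.comp
        (continuous_id.prodMk continuous_id))).enorm.measurable
    rw [← setLIntegral_eq_of_support_subset hsupp', Measure.volume_eq_prod]
    exact (setLIntegral_prod_fst hmeas B B).symm
  calc volume B * ∫⁻ x, ‖f (sumEquivProd.symm (x, x))‖ₑ
      ≤ (∫⁻ p in B ×ˢ B, ‖f (diagShift 1 p)‖ₑ) +
          ∫⁻ t in Icc (0 : ℝ) 1, ∫⁻ p in B ×ˢ B, ‖fderiv ℝ f (diagShift t p)‖ₑ :=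
      hdiag.trans_le (setLIntegral_enorm_diag_le hf measurableSet_closedBall)
    _ ≤ volume (B ×ˢ B) ^ (1 - 1 / q.toReal) * eLpNorm f q volume +
          ∫⁻ t in Icc (0 : ℝ) 1, volume (B ×ˢ B) ^ (1 - 1 / q.toReal) *
            ENNReal.ofReal |(t ^ Fintype.card ι)⁻¹| ^ (1 / q.toReal) *
              eLpNorm (fderiv ℝ f) q volume := by
      gcongr ?_ + ?_
      · simpa using setLIntegral_enorm_comp_diagShift_le hf.continuous.aestronglyMeasurable
          (B ×ˢ B) hq1 hq one_ne_zero
      · rw [← restrict_Ioc_eq_restrict_Icc]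
        exact setLIntegral_mono' measurableSet_Ioc fun t ht =>
          setLIntegral_enorm_comp_diagShift_le
            (hf.continuous_fderiv one_ne_zero).aestronglyMeasurable _ hq1 hq ht.1.ne'
    _ = _ := by
      rw [lintegral_mul_const, lintegral_const_mul]
      · ring
      all_goals fun_prop

theorem exists_lintegral_enorm_diag_le {q : ℝ≥0∞} (hq1 : 1 ≤ q)
    (hq : (Fintype.card ι : ℝ) < q.toReal) :
    ∃ C : ℝ≥0, ∀ f : EuclideanSpace ℝ (ι ⊕ ι) → G, ContDiff ℝ 1 f →
      Function.support f ⊆ Metric.closedBall 0 1 →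
      ∫⁻ x, ‖f (sumEquivProd.symm (x, x))‖ₑ ≤
        C * (eLpNorm f q volume + eLpNorm (fderiv ℝ f) q volume) := by
  have hq_top : q ≠ ∞ := by
    rintro rfl
    simp only [ENNReal.toReal_top] at hq
    exact hq.not_ge (Nat.cast_nonneg _)
  set B := Metric.closedBall (0 : EuclideanSpace ℝ ι) 1
  set K := ∫⁻ t in Icc (0 : ℝ) 1, ENNReal.ofReal |(t ^ Fintype.card ι)⁻¹| ^ (1 / q.toReal)
  set A := (volume B)⁻¹ * volume (B ×ˢ B) ^ (1 - 1 / q.toReal)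
  have hB0 : volume B ≠ 0 := (Metric.measure_closedBall_pos volume 0 one_pos).ne'
  have hBtop : volume B ≠ ∞ := measure_closedBall_lt_top.ne
  have hA : A ≠ ∞ := by
    refine ENNReal.mul_ne_top (ENNReal.inv_ne_top.2 hB0) (ENNReal.rpow_ne_top_of_nonneg ?_ ?_)
    · have : 1 ≤ q.toReal := by simpa using ENNReal.toReal_mono hq_top hq1
      exact sub_nonneg.2 ((div_le_one (by linarith)).2 this)
    · rw [Measure.volume_eq_prod, Measure.prod_prod]
      exact ENNReal.mul_ne_top hBtop hBtop
  have hK : K ≠ ∞ := (setLIntegral_inv_pow_rpow_lt_top hq).ne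
  refine ⟨(A * (1 + K)).toNNReal, fun f hf hsupp => ?_⟩
  rw [ENNReal.coe_toNNReal (ENNReal.mul_ne_top hA (ENNReal.add_ne_top.2 ⟨ENNReal.one_ne_top, hK⟩))]
  calc ∫⁻ x, ‖f (sumEquivProd.symm (x, x))‖ₑ
      = (volume B)⁻¹ * (volume B * ∫⁻ x, ‖f (sumEquivProd.symm (x, x))‖ₑ) := by
        rw [← mul_assoc, ENNReal.inv_mul_cancel hB0 hBtop, one_mul]
    _ ≤ (volume B)⁻¹ * (volume (B ×ˢ B) ^ (1 - 1 / q.toReal) *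
          (eLpNorm f q volume + K * eLpNorm (fderiv ℝ f) q volume)) := by
        gcongr (volume B)⁻¹ * ?_
        exact volume_closedBall_mul_lintegral_enorm_diag_le hf hsupp hq1 hq_top
    _ ≤ A * (1 + K) * (eLpNorm f q volume + eLpNorm (fderiv ℝ f) q volume) := by
        rw [← mul_assoc, mul_assoc A, mul_add (1 + K)]
        gcongr
        · exact le_mul_of_one_le_left' le_self_add
        · exact le_add_self

theorem exists_integral_norm_diag_le {q : ℝ} (hq1 : 1 ≤ q) (hq : (Fintype.card ι : ℝ) < q) :
    ∃ C : ℝ≥0, ∀ f : EuclideanSpace ℝ (ι ⊕ ι) → G, ContDiff ℝ 1 f →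
      Function.support f ⊆ Metric.closedBall 0 1 →
      ∫ x, ‖f (sumEquivProd.symm (x, x))‖ ≤
        C * ((∫ z, ‖f z‖ ^ q) ^ (1 / q) + (∫ z, ‖fderiv ℝ f z‖ ^ q) ^ (1 / q)) := by
  have hq0 : 0 < q := by linarith
  obtain ⟨C, hC⟩ := exists_lintegral_enorm_diag_le (ι := ι) (G := G) (q := ENNReal.ofReal q)
    (by simpa using hq1) (by simpa [ENNReal.toReal_ofReal hq0.le] using hq)
  refine ⟨C, fun f hf hsupp => ?_⟩
  have hfc : HasCompactSupport f := HasCompactSupport.intro (isCompact_closedBall 0 1)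
    fun z hz => Function.notMem_support.1 fun h => hz (hsupp h)
  have hf_mem : MemLp f (ENNReal.ofReal q) := hf.continuous.memLp_of_hasCompactSupport hfc
  have hDf_mem : MemLp (fderiv ℝ f) (ENNReal.ofReal q) :=
    (hf.continuous_fderiv one_ne_zero).memLp_of_hasCompactSupport (hfc.fderiv (𝕜 := ℝ))
  have hdiag : Continuous fun x : EuclideanSpace ℝ ι => f (sumEquivProd.symm (x, x)) :=
    hf.continuous.comp (sumEquivProd.symm.continuous.comp (continuous_id.prodMk continuous_id))
  have hreal := ENNReal.toReal_mono (ENNReal.mul_ne_top ENNReal.coe_ne_top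
    (ENNReal.add_ne_top.2 ⟨hf_mem.eLpNorm_ne_top, hDf_mem.eLpNorm_ne_top⟩)) (hC f hf hsupp)
  rwa [← integral_norm_eq_lintegral_enorm hdiag.aestronglyMeasurable, ENNReal.toReal_mul,
    ENNReal.toReal_add hf_mem.eLpNorm_ne_top hDf_mem.eLpNorm_ne_top,
    toReal_eLpNorm_ofReal_eq hq0 hf_mem, toReal_eLpNorm_ofReal_eq hq0 hDf_mem] at hreal

end DiagShift

/-- Trace-type inequality: for `q > n` there is a constant `C > 0` such that every
`C¹` function on `ℝⁿ × ℝⁿ ≅ ℝ²ⁿ` supported in the closed unit ball satisfies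
`∫ |f(x,x)| dx ≤ C (‖f‖_{L^q} + ‖Df‖_{L^q})`. -/
theorem diagonal_trace_inequality (n : ℕ) (hn : 1 ≤ n) (q : ℝ) (hq : (n : ℝ) < q) :
    ∃ C : ℝ, 0 < C ∧
      ∀ f : EuclideanSpace ℝ (Fin n ⊕ Fin n) → ℝ,
        ContDiff ℝ 1 f →
        Function.support f ⊆ Metric.closedBall 0 1 →
        ∫ x : EuclideanSpace ℝ (Fin n), |f (diagE n x)| ≤
          C * ((∫ z : EuclideanSpace ℝ (Fin n ⊕ Fin n), |f z| ^ q) ^ (1 / q)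
            + (∫ z : EuclideanSpace ℝ (Fin n ⊕ Fin n), ‖fderiv ℝ f z‖ ^ q) ^ (1 / q)) := by
  obtain ⟨C, hC⟩ := exists_integral_norm_diag_le (ι := Fin n) (G := ℝ)
    (le_trans (by exact_mod_cast hn) hq.le) (by simpa using hq)
  refine ⟨C + 1, by positivity, fun f hf hsupp => ?_⟩
  have hbound := hC f hf hsupp
  simp only [Real.norm_eq_abs] at hbound
  -- `diagE n x` unfolds to `sumEquivProd.symm (x, x)`
  refine hbound.trans ?_
  gcongr ?_ * _
  linarith
end

section
/- Let n ≥ 1. Write σ_{n−1} = {x ∈ ℝⁿ : x_i ≥ 0 for all i and ∑_{i=1}^n x_i = 1} and σ_n = {y ∈ ℝ^{n+1} : y_j ≥ 0 for all j and ∑_{j=1}^{n+1} y_j = 1} for the standard simplices. Define η : ℝⁿ → ℝ by η(x) = ∏_{i=1}^n x_i and ζ : σ_{n−1} × [0,1) → ℝ^{n+1} by ζ(x,t) = ( (1 − t·η(x))·x , t·η(x) ). Then ζ(x,t) ∈ σ_n for every (x,t) ∈ σ_{n−1} × [0,1), and the restriction of ζ to {x ∈ σ_{n−1} : x_i > 0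 for all i} × [0,1) is injective. -/
open Finset

/-- The standard simplex `σ_{m-1} = {x ∈ ℝᵐ : xᵢ ≥ 0, ∑ xᵢ = 1}`. -/
def stdSimplexSet (m : ℕ) : Set (Fin m → ℝ) :=
  {x | (∀ i, 0 ≤ x i) ∧ ∑ i, x i = 1}

/-- `η(x) = ∏ᵢ xᵢ`. -/
def etaProd (n : ℕ) (x : Fin n → ℝ) : ℝ := ∏ i, x i

/-- `ζ(x,t) = ((1 - t·η(x))·x , t·η(x)) ∈ ℝ^{n+1}`: the first `n` coordinates are
`(1 - t·η(x))·xᵢ` and the last coordinate is `t·η(x)`. -/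
def zetaMap (n : ℕ) (x : Fin n → ℝ) (t : ℝ) : Fin (n + 1) → ℝ :=
  Fin.snoc (fun i => (1 - t * etaProd n x) * x i) (t * etaProd n x)

/-!
The point `ζ(x,t)` lies on the segment from `(x, 0)` to the vertex `(0, 1)` of `σ_n`, at
parameter `c = t·η(x) ∈ [0,1)`. Conversely `ζ(x,t)` determines `c` as its last coordinate,
then `x` as its first `n` coordinates divided by `1 - c ≠ 0`, and finally `t = c / η(x)`,
which needs `η(x) > 0`, i.e. `x` in the relative interior.
-/

section

variable {n : ℕ}

lemma etaProd_mem_Icc {x : Fin n → ℝ} (hx : x ∈ stdSimplexSet n) :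
    etaProd n x ∈ Set.Icc 0 1 :=
  ⟨prod_nonneg fun i _ => hx.1 i,
    prod_le_one (fun i _ => hx.1 i) fun i _ => (mem_Icc_of_mem_stdSimplex (𝕜 := ℝ) hx i).2⟩

lemma etaProd_pos {x : Fin n → ℝ} (hx : ∀ i, 0 < x i) : 0 < etaProd n x :=
  prod_pos fun i _ => hx i

lemma snoc_mem_stdSimplexSet {x : Fin n → ℝ} {c : ℝ} (hx : x ∈ stdSimplexSet n)
    (hc : c ∈ Set.Icc 0 1) :
    (Fin.snoc (fun i => (1 - c) * x i) c : Fin (n + 1) → ℝ) ∈ stdSimplexSet (n + 1) := by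
  constructor
  · refine Fin.lastCases ?_ fun i => ?_
    · simpa only [Fin.snoc_last] using hc.1
    · simpa only [Fin.snoc_castSucc] using mul_nonneg (sub_nonneg.2 hc.2) (hx.1 i)
  · rw [Fin.sum_univ_castSucc]
    simp only [Fin.snoc_castSucc, Fin.snoc_last, ← mul_sum, hx.2]
    ring

lemma eq_of_snoc_eq {x y : Fin n → ℝ} {c d : ℝ} (hc : c ≠ 1)
    (h : (Fin.snoc (fun i => (1 - c) * x i) c : Fin (n + 1) → ℝ) =
      Fin.snoc (fun i => (1 - d) * y i) d) :
    c = d ∧ x = y := by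
  obtain ⟨hxy, rfl⟩ := Fin.snoc_inj.1 h
  exact ⟨rfl, funext fun i => mul_left_cancel₀ (sub_ne_zero.2 hc.symm) (congrFun hxy i)⟩

lemma zetaMap_mem_stdSimplexSet {x : Fin n → ℝ} {t : ℝ} (hx : x ∈ stdSimplexSet n)
    (ht : t ∈ Set.Icc 0 1) : zetaMap n x t ∈ stdSimplexSet (n + 1) :=
  snoc_mem_stdSimplexSet hx (unitInterval.mul_mem ht (etaProd_mem_Icc hx))

lemma eq_of_zetaMap_eq {x y : Fin n → ℝ} {t s : ℝ} (hx : x ∈ stdSimplexSet n)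
    (hx₀ : ∀ i, 0 < x i) (ht : t ∈ Set.Ico 0 1) (h : zetaMap n x t = zetaMap n y s) :
    x = y ∧ t = s := by
  have hc : t * etaProd n x ≠ 1 :=
    ((mul_le_of_le_one_right ht.1 (etaProd_mem_Icc hx).2).trans_lt ht.2).ne
  obtain ⟨hts, rfl⟩ := eq_of_snoc_eq hc h
  exact ⟨rfl, mul_right_cancel₀ (etaProd_pos hx₀).ne' hts⟩

end

theorem zetaMap_mem_simplex_and_injOn_general (n : ℕ) :
    (∀ x ∈ stdSimplexSet n, ∀ t ∈ Set.Ico (0 : ℝ) 1,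
      zetaMap n x t ∈ stdSimplexSet (n + 1)) ∧
    Set.InjOn (fun p : (Fin n → ℝ) × ℝ => zetaMap n p.1 p.2)
      (({x | x ∈ stdSimplexSet n ∧ ∀ i, 0 < x i}) ×ˢ Set.Ico (0 : ℝ) 1) := by
  refine ⟨fun x hx t ht => zetaMap_mem_stdSimplexSet hx (Set.Ico_subset_Icc_self ht), ?_⟩
  rintro ⟨x, t⟩ ⟨⟨hx, hx₀⟩, ht⟩ ⟨y, s⟩ - h
  obtain ⟨rfl, rfl⟩ := eq_of_zetaMap_eq hx hx₀ ht h
  rfl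

/-- `ζ` maps `σ_{n-1} × [0,1)` into `σ_n`, and is injective on
(relative interior of `σ_{n-1}`) `× [0,1)`. -/
theorem zetaMap_mem_simplex_and_injOn (n : ℕ) (hn : 1 ≤ n) :
    (∀ x ∈ stdSimplexSet n, ∀ t ∈ Set.Ico (0 : ℝ) 1,
      zetaMap n x t ∈ stdSimplexSet (n + 1)) ∧
    Set.InjOn (fun p : (Fin n → ℝ) × ℝ => zetaMap n p.1 p.2)
      (({x | x ∈ stdSimplexSet n ∧ ∀ i, 0 < x i}) ×ˢ Set.Ico (0 : ℝ) 1) :=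
  zetaMap_mem_simplex_and_injOn_general n
end
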